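/- arXiv:1606.04608 — 2 statements merged into one kernel-verified Lean document; each statement's English description precedes it below -/
import Mathlib

section
/- (Li–Cai) Let a and b be integers with 1 ≤ a < b and let G be a simple graph on n vertices with minimum degree δ(G) ≥ a and n ≥ 2a + b + (a²−a)/b. If max{deg_G(u), deg_G(v)} ≥ a·n/(a+b) for every pair of nonadjacent vertices u, v of G, then G has an [a,b]-factor. -/
open SimpleGraph

/-- The degree of `v` in `G` (instance-free formulation). -/
noncomputable def gdeg {V : Type*} (G : SimpleGraph V) (v : V) : ℕ :=
  Nat.card (G.neighborSet v)

/-- `G` has an `[a,b]`-factor: a spanning subgraph `F` with `a ≤ deg_F v ≤ b` for all `v`. -/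
def HasIntervalFactor {V : Type*} (G : SimpleGraph V) (a b : ℕ) : Prop :=
  ∃ F : SimpleGraph V, F ≤ G ∧ ∀ v : V, a ≤ gdeg F v ∧ gdeg F v ≤ b

open Finset

section LiCaiAux

variable {V : Type*} [Fintype V] [DecidableEq V]

/-- out-degree of `v` in a directed pair set. -/
def degR (R : Finset (V × V)) (v : V) : ℕ := (univ.filter (fun w => (v, w) ∈ R)).card

lemma degR_insert (R : Finset (V × V)) (p : V × V) (hp : p ∉ R) (w : V) :
    (degR (insert p R) w : ℤ) = degR R w + (if w = p.1 then 1 else 0) := by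
  unfold degR
  by_cases h : w = p.1
  · subst h
    rw [if_pos rfl]
    have : univ.filter (fun x => (p.1, x) ∈ insert p R)
        = insert p.2 (univ.filter (fun x => (p.1, x) ∈ R)) := by
      ext x
      simp only [mem_filter, mem_univ, true_and, Finset.mem_insert]
      constructor
      · rintro (h | h)
        · left; rw [← h]
        · right; exact h
      · rintro (h | h)
        · left; subst h; rfl
        · right; exact h
    rw [this, card_insert_of_notMem (by simp [hp])]
    push_cast; ring
  · rw [if_neg h]
    have : univ.filter (fun x => (w, x) ∈ insert p R)
        = univ.filter (fun x => (w, x) ∈ R) := by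
      ext x
      simp only [mem_filter, mem_univ, true_and, Finset.mem_insert]
      constructor
      · rintro (hh | hh)
        · exact absurd (congrArg Prod.fst hh).symm (fun hc => h hc.symm)
        · exact hh
      · exact fun hh => Or.inr hh
    rw [this]; push_cast; ring

lemma degR_erase (R : Finset (V × V)) (p : V × V) (hp : p ∈ R) (w : V) :
    (degR (R.erase p) w : ℤ) = degR R w - (if w = p.1 then 1 else 0) := by
  have h1 : p ∉ R.erase p := notMem_erase _ _
  have h2 : insert p (R.erase p) = R := insert_erase hp
  have := degR_insert (R.erase p) p h1 w
  rw [h2] at this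
  rw [this]; ring


/-- Alternating reachability from a deficient vertex `z0`, carrying the modified
pair set along. `Reach G R z0 false R₁ u` : `u` reached on the "T side", with the
alternating trail already flipped in `R₁` (ending with an edge removal, except at base).
`Reach G R z0 true R₁ v` : `v` reached on the "S side" (ending with an edge insertion). -/
inductive Reach (G : SimpleGraph V) (R : Finset (V × V)) (z0 : V) :
    Bool → Finset (V × V) → V → Prop
  | base : Reach G R z0 false R z0
  | toS {R₁ : Finset (V × V)} {t v : V} : Reach G R z0 false R₁ t → G.Adj t v →
      (t, v) ∉ R₁ → Reach G R z0 true (insert (t, v) (insert (v, t) R₁)) v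
  | toT {R₁ : Finset (V × V)} {s u : V} : Reach G R z0 true R₁ s → (u, s) ∈ R₁ →
      Reach G R z0 false ((R₁.erase (u, s)).erase (s, u)) u

lemma reach_inv {G : SimpleGraph V} {R : Finset (V × V)} {z0 : V}
    {sd : Bool} {R₁ : Finset (V × V)} {x : V}
    (h : Reach G R z0 sd R₁ x)
    (hadj : ∀ p ∈ R, G.Adj p.1 p.2) (hsym : ∀ p ∈ R, p.swap ∈ R) :
    (∀ p ∈ R₁, G.Adj p.1 p.2) ∧ (∀ p ∈ R₁, p.swap ∈ R₁) ∧
    (∀ w, (degR R₁ w : ℤ) = degR R w + (if w = z0 then 1 else 0)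
        + (if sd then (if w = x then 1 else 0) else (if w = x then -1 else 0))) := by
  induction h with
  | base =>
    refine ⟨hadj, hsym, fun w => ?_⟩
    by_cases h : w = z0 <;> simp [h]
  | toS hr hadj' hnm ih =>
    obtain ⟨ih1, ih2, ih3⟩ := ih
    rename_i R₁ t v
    have htv : t ≠ v := G.ne_of_adj hadj'
    have hnm2 : (v, t) ∉ R₁ := fun hc => hnm (by simpa using ih2 _ hc)
    have hnm3 : (t, v) ∉ insert (v, t) R₁ := by
      simp only [Finset.mem_insert]
      rintro (h | h)
      · exact htv (Prod.ext_iff.1 h).1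
      · exact hnm h
    refine ⟨?_, ?_, ?_⟩
    · intro p hp
      rcases Finset.mem_insert.1 hp with h | hp
      · subst h; exact hadj'
      rcases Finset.mem_insert.1 hp with h | hp
      · subst h; exact hadj'.symm
      · exact ih1 p hp
    · intro p hp
      rcases Finset.mem_insert.1 hp with h | hp'
      · subst h; exact Finset.mem_insert_of_mem (Finset.mem_insert_self _ _)
      rcases Finset.mem_insert.1 hp' with h | hp''
      · subst h; exact Finset.mem_insert_self _ _
      · exact Finset.mem_insert_of_mem (Finset.mem_insert_of_mem (ih2 p hp''))
    · intro w
      rw [degR_insert _ _ hnm3 w, degR_insert _ _ hnm2 w]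
      have := ih3 w
      simp only [Bool.false_eq_true, if_false, if_true] at this ⊢
      split_ifs at this ⊢ <;> omega
  | toT hr hm ih =>
    obtain ⟨ih1, ih2, ih3⟩ := ih
    rename_i R₁ s u
    have hus : u ≠ s := G.ne_of_adj (ih1 _ hm)
    have hm2 : (s, u) ∈ R₁ := by simpa using ih2 _ hm
    have hm2' : (s, u) ∈ R₁.erase (u, s) := by
      refine Finset.mem_erase.2 ⟨?_, hm2⟩
      intro hc; exact hus (by simpa using (Prod.ext_iff.1 hc).1.symm)
    refine ⟨?_, ?_, ?_⟩
    · intro p hp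
      exact ih1 p (Finset.mem_of_mem_erase (Finset.mem_of_mem_erase hp))
    · intro p hp
      have hp1 : p ∈ R₁ := Finset.mem_of_mem_erase (Finset.mem_of_mem_erase hp)
      have hpne1 : p ≠ (s, u) := (Finset.mem_erase.1 hp).1
      have hpne2 : p ≠ (u, s) := (Finset.mem_erase.1 (Finset.mem_of_mem_erase hp)).1
      refine Finset.mem_erase.2 ⟨?_, Finset.mem_erase.2 ⟨?_, ih2 p hp1⟩⟩
      · intro hc
        exact hpne2 (by rw [← Prod.swap_swap p, hc]; rfl)
      · intro hc
        exact hpne1 (by rw [← Prod.swap_swap p, hc]; rfl)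
    · intro w
      rw [degR_erase _ _ hm2' w, degR_erase _ _ hm w]
      have := ih3 w
      simp only [if_true, Bool.false_eq_true, if_false] at this ⊢
      split_ifs at this ⊢ <;> omega


def Sset (G : SimpleGraph V) (R : Finset (V × V)) (z0 : V) : Set V :=
  {v | ∃ R₁, Reach G R z0 true R₁ v}

def Tset (G : SimpleGraph V) (R : Finset (V × V)) (z0 : V) : Set V :=
  {u | ∃ R₁, Reach G R z0 false R₁ u}

lemma reach_delta {G : SimpleGraph V} {R : Finset (V × V)} {z0 : V}
    {sd : Bool} {R₁ : Finset (V × V)} {x : V}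
    (h : Reach G R z0 sd R₁ x) :
    ∀ p : V × V, ((p ∈ R₁ ∧ p ∉ R) ∨ (p ∈ R ∧ p ∉ R₁)) →
      (p.1 ∈ Tset G R z0 ∧ p.2 ∈ Sset G R z0) ∨
      (p.1 ∈ Sset G R z0 ∧ p.2 ∈ Tset G R z0) := by
  induction h with
  | base =>
    rintro p (⟨h1, h2⟩ | ⟨h1, h2⟩) <;> exact absurd h1 h2
  | toS hr hadj' hnm ih =>
    rename_i R₁ t v
    have htT : t ∈ Tset G R z0 := ⟨R₁, hr⟩
    have hvS : v ∈ Sset G R z0 := ⟨_, Reach.toS hr hadj' hnm⟩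
    rintro p (⟨h1, h2⟩ | ⟨h1, h2⟩)
    · rcases Finset.mem_insert.1 h1 with h | h1'
      · subst h; exact Or.inl ⟨htT, hvS⟩
      rcases Finset.mem_insert.1 h1' with h | h1''
      · subst h; exact Or.inr ⟨hvS, htT⟩
      · exact ih p (Or.inl ⟨h1'', h2⟩)
    · refine ih p (Or.inr ⟨h1, fun hc => h2 ?_⟩)
      exact Finset.mem_insert_of_mem (Finset.mem_insert_of_mem hc)
  | toT hr hm ih =>
    rename_i R₁ s u
    have hsS : s ∈ Sset G R z0 := ⟨R₁, hr⟩
    have huT : u ∈ Tset G R z0 := ⟨_, Reach.toT hr hm⟩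
    rintro p (⟨h1, h2⟩ | ⟨h1, h2⟩)
    · exact ih p (Or.inl ⟨Finset.mem_of_mem_erase (Finset.mem_of_mem_erase h1), h2⟩)
    · by_cases hp1 : p ∈ R₁
      · by_cases hus : p = (u, s)
        · subst hus; exact Or.inl ⟨huT, hsS⟩
        by_cases hsu : p = (s, u)
        · subst hsu; exact Or.inr ⟨hsS, huT⟩
        · exact absurd (Finset.mem_erase.2 ⟨hsu, Finset.mem_erase.2 ⟨hus, hp1⟩⟩) h2
      · exact ih p (Or.inr ⟨h1, hp1⟩)


/-- number of neighbours of `t` outside `S`. -/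
def dGS (G : SimpleGraph V) [DecidableRel G.Adj] (S : Finset V) (t : V) : ℕ :=
  (univ.filter (fun v => v ∉ S ∧ G.Adj t v)).card

/-- Existence of a symmetric degree-constrained pair system, given the
Lovász-type condition. -/
lemma exists_factor_of_cond (G : SimpleGraph V) [DecidableRel G.Adj] (a b : ℕ)
    (ha : 1 ≤ a) (hab : a < b)
    (hcond : ∀ S T : Finset V, Disjoint S T → T.Nonempty →
      a * T.card ≤ b * S.card + ∑ t ∈ T, dGS G S t) :
    ∃ R : Finset (V × V), (∀ p ∈ R, G.Adj p.1 p.2) ∧ (∀ p ∈ R, p.swap ∈ R) ∧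
      ∀ v, a ≤ degR R v ∧ degR R v ≤ b := by
  classical
  set Good : Finset (V × V) → Prop := fun R =>
    (∀ p ∈ R, G.Adj p.1 p.2) ∧ (∀ p ∈ R, p.swap ∈ R) ∧ (∀ v, degR R v ≤ b) with hGoodDef
  set Φ : Finset (V × V) → ℕ := fun R => ∑ v, min (degR R v) a with hΦdef
  have hgoodEmpty : Good ∅ := by
    refine ⟨by simp, by simp, fun v => ?_⟩
    simp [degR]
  obtain ⟨R, hRmem, hmax⟩ :=
    Finset.exists_max_image (univ.filter fun R => Good R) Φ
      ⟨∅, by simp only [Finset.mem_filter, Finset.mem_univ, true_and]; exact hgoodEmpty⟩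
  have hGood : Good R := (Finset.mem_filter.1 hRmem).2
  have hmax' : ∀ R' : Finset (V × V), Good R' → Φ R' ≤ Φ R := fun R' h =>
    hmax R' (Finset.mem_filter.2 ⟨Finset.mem_univ _, h⟩)
  by_cases hlow : ∀ v, a ≤ degR R v
  · exact ⟨R, hGood.1, hGood.2.1, fun v => ⟨hlow v, hGood.2.2 v⟩⟩
  exfalso
  push_neg at hlow
  obtain ⟨z0, hz0⟩ := hlow
  -- every vertex reachable on the S side is saturated
  have hSdeg : ∀ v ∈ Sset G R z0, degR R v = b := by
    rintro v ⟨R₁, hr⟩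
    by_contra hne
    have hvb : degR R v < b := lt_of_le_of_ne (hGood.2.2 v) hne
    obtain ⟨h1, h2, h3⟩ := reach_inv hr hGood.1 hGood.2.1
    simp only [if_true] at h3
    have hGood1 : Good R₁ := by
      refine ⟨h1, h2, fun w => ?_⟩
      have h3w := h3 w
      have hb := hGood.2.2 w
      split_ifs at h3w with e1 e2 e2
      · subst e1; subst e2; omega
      · subst e1; omega
      · subst e2; omega
      · omega
    have hΦlt : Φ R < Φ R₁ := by
      apply Finset.sum_lt_sum
      · intro w _
        have h3w := h3 w
        have : degR R w ≤ degR R₁ w := by split_ifs at h3w <;> omega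
        exact min_le_min this le_rfl
      · refine ⟨z0, Finset.mem_univ _, ?_⟩
        have h3w := h3 z0
        rw [if_pos rfl] at h3w
        have : degR R z0 + 1 ≤ degR R₁ z0 := by split_ifs at h3w <;> omega
        omega
    exact absurd (hmax' R₁ hGood1) (by omega)
  -- every vertex ≠ z0 reachable on the T side has degree ≤ a
  have hTdeg : ∀ u ∈ Tset G R z0, u ≠ z0 → degR R u ≤ a := by
    rintro u ⟨R₁, hr⟩ hne
    by_contra hgt
    push_neg at hgt
    obtain ⟨h1, h2, h3⟩ := reach_inv hr hGood.1 hGood.2.1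
    simp only [Bool.false_eq_true, if_false] at h3
    have hGood1 : Good R₁ := by
      refine ⟨h1, h2, fun w => ?_⟩
      have h3w := h3 w
      have hb := hGood.2.2 w
      split_ifs at h3w with e1 e2 e2
      · exact absurd (e2.symm.trans e1) hne
      · subst e1; omega
      · subst e2; omega
      · omega
    have hΦlt : Φ R < Φ R₁ := by
      apply Finset.sum_lt_sum
      · intro w _
        have h3w := h3 w
        by_cases e2 : w = u
        · subst e2
          rw [if_neg hne, if_pos rfl] at h3w
          omega
        · rw [if_neg e2] at h3w
          by_cases e1 : w = z0
          · rw [if_pos e1] at h3w; omega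
          · rw [if_neg e1] at h3w; omega
      · refine ⟨z0, Finset.mem_univ _, ?_⟩
        have h3w := h3 z0
        have hne' : z0 ≠ u := fun hc => hne hc.symm
        rw [if_pos rfl, if_neg hne'] at h3w
        have : degR R z0 + 1 ≤ degR R₁ z0 := by omega
        omega
    exact absurd (hmax' R₁ hGood1) (by omega)
  have hz0T : z0 ∈ Tset G R z0 := ⟨R, Reach.base⟩
  have hST : ∀ v, v ∈ Sset G R z0 → v ∈ Tset G R z0 → False := by
    intro v hvS hvT
    have hb := hSdeg v hvS
    by_cases hvz : v = z0
    · subst hvz; omega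
    · have := hTdeg v hvT hvz; omega
  -- closure properties
  have hii : ∀ u v, (u, v) ∈ R → v ∈ Sset G R z0 → u ∈ Tset G R z0 := by
    intro u v hR hv
    obtain ⟨R₁, hr⟩ := hv
    by_cases h1 : (u, v) ∈ R₁
    · exact ⟨_, Reach.toT hr h1⟩
    · rcases reach_delta hr (u, v) (Or.inr ⟨hR, h1⟩) with ⟨h, _⟩ | ⟨hS', hT'⟩
      · exact h
      · exact (hST v ⟨R₁, hr⟩ hT').elim
  have hiii : ∀ t v, t ∈ Tset G R z0 → G.Adj t v → (t, v) ∉ R → v ∈ Sset G R z0 := by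
    intro t v htT hadj hnm
    obtain ⟨R₁, hr⟩ := htT
    by_cases h1 : (t, v) ∈ R₁
    · rcases reach_delta hr (t, v) (Or.inl ⟨h1, hnm⟩) with ⟨_, h⟩ | ⟨hS', hT'⟩
      · exact h
      · exact (hST t hS' ⟨R₁, hr⟩).elim
    · exact ⟨_, Reach.toS hr hadj h1⟩
  -- pass to finsets
  set Sf : Finset V := univ.filter (fun v => v ∈ Sset G R z0) with hSfdef
  set Tf : Finset V := univ.filter (fun v => v ∈ Tset G R z0) with hTfdef
  have hmemS : ∀ v, v ∈ Sf ↔ v ∈ Sset G R z0 := by intro v; simp [hSfdef]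
  have hmemT : ∀ v, v ∈ Tf ↔ v ∈ Tset G R z0 := by intro v; simp [hTfdef]
  have hz0Tf : z0 ∈ Tf := (hmemT z0).2 hz0T
  have hdisj : Disjoint Sf Tf := by
    rw [Finset.disjoint_left]
    intro v hvS hvT
    exact hST v ((hmemS v).1 hvS) ((hmemT v).1 hvT)
  -- the upper bound on ∑ degR over Tf
  have hupper : (∑ t ∈ Tf, degR R t) + 1 ≤ a * Tf.card := by
    rw [← Finset.add_sum_erase _ _ hz0Tf]
    have h1 : ∑ t ∈ Tf.erase z0, degR R t ≤ (Tf.erase z0).card * a := by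
      apply Finset.sum_le_card_nsmul
      intro x hx
      exact hTdeg x ((hmemT x).1 (Finset.mem_of_mem_erase hx)) (Finset.ne_of_mem_erase hx)
    have h2 : (Tf.erase z0).card = Tf.card - 1 := Finset.card_erase_of_mem hz0Tf
    have h3 : 1 ≤ Tf.card := Finset.card_pos.2 ⟨z0, hz0Tf⟩
    obtain ⟨c, hc⟩ := Nat.exists_eq_add_of_le h3
    rw [hc] at h2 ⊢
    rw [h2] at h1
    simp only [Nat.add_sub_cancel_left] at h1
    have : a * (1 + c) = a + c * a := by ring
    rw [this]
    omega
  -- the lower bound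
  have hlower : b * Sf.card + ∑ t ∈ Tf, dGS G Sf t ≤ ∑ t ∈ Tf, degR R t := by
    have hAB : ∀ t, (Sf.filter (fun v => (t, v) ∈ R)).card
        + (univ.filter (fun v => v ∉ Sf ∧ (t, v) ∈ R)).card = degR R t := by
      intro t
      have hdisj2 : Disjoint (Sf.filter (fun v => (t, v) ∈ R))
          (univ.filter (fun v => v ∉ Sf ∧ (t, v) ∈ R)) := by
        rw [Finset.disjoint_left]
        intro v h1 h2
        simp only [Finset.mem_filter, Finset.mem_univ, true_and] at h1 h2
        exact h2.1 h1.1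
      have hunion : (Sf.filter (fun v => (t, v) ∈ R))
          ∪ (univ.filter (fun v => v ∉ Sf ∧ (t, v) ∈ R))
          = univ.filter (fun w => (t, w) ∈ R) := by
        ext v
        simp only [Finset.mem_union, Finset.mem_filter, Finset.mem_univ, true_and]
        by_cases hv : v ∈ Sf <;> tauto
      rw [degR, ← hunion, Finset.card_union_of_disjoint hdisj2]
    have hB : ∀ t ∈ Tf, dGS G Sf t ≤ (univ.filter (fun v => v ∉ Sf ∧ (t, v) ∈ R)).card := by
      intro t ht
      apply Finset.card_le_card
      intro v hv
      simp only [dGS, Finset.mem_filter, Finset.mem_univ, true_and] at hv ⊢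
      refine ⟨hv.1, ?_⟩
      by_contra hnm
      exact hv.1 ((hmemS v).2 (hiii t v ((hmemT t).1 ht) hv.2 hnm))
    have hA : ∑ t ∈ Tf, (Sf.filter (fun v => (t, v) ∈ R)).card = b * Sf.card := by
      have : ∀ t, (Sf.filter (fun v => (t, v) ∈ R)).card
          = ∑ v ∈ Sf, (if (t, v) ∈ R then 1 else 0) := by
        intro t; rw [Finset.card_filter]
      simp only [this]
      rw [Finset.sum_comm]
      have hv : ∀ v ∈ Sf, ∑ t ∈ Tf, (if (t, v) ∈ R then 1 else 0) = b := by
        intro v hv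
        have hvS : v ∈ Sset G R z0 := (hmemS v).1 hv
        have : ∑ t ∈ Tf, (if (t, v) ∈ R then 1 else 0)
            = (Tf.filter (fun t => (t, v) ∈ R)).card := by
          rw [Finset.card_filter]
        rw [this]
        have he : Tf.filter (fun t => (t, v) ∈ R) = univ.filter (fun t => (t, v) ∈ R) := by
          ext t
          simp only [Finset.mem_filter, Finset.mem_univ, true_and, hmemT]
          exact ⟨fun h => h.2, fun h => ⟨hii t v h hvS, h⟩⟩
        have he2 : univ.filter (fun t => (t, v) ∈ R) = univ.filter (fun t => (v, t) ∈ R) := by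
          ext t
          simp only [Finset.mem_filter, Finset.mem_univ, true_and]
          constructor
          · intro h; have := hGood.2.1 _ h; simpa using this
          · intro h; have := hGood.2.1 _ h; simpa using this
        rw [he, he2, ← degR]
        exact hSdeg v hvS
      rw [Finset.sum_congr rfl hv]
      simp [mul_comm]
    calc b * Sf.card + ∑ t ∈ Tf, dGS G Sf t
        ≤ ∑ t ∈ Tf, (Sf.filter (fun v => (t, v) ∈ R)).card
          + ∑ t ∈ Tf, (univ.filter (fun v => v ∉ Sf ∧ (t, v) ∈ R)).card := by
          rw [hA]
          exact Nat.add_le_add le_rfl (Finset.sum_le_sum hB)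
      _ = ∑ t ∈ Tf, degR R t := by rw [← Finset.sum_add_distrib]; exact Finset.sum_congr rfl (fun t _ => hAB t)
  have hc := hcond Sf Tf hdisj ⟨z0, hz0Tf⟩
  linarith


end LiCaiAux

set_option maxHeartbeats 3200000 in
lemma keynum (a b n s m k : ℕ) (dC dK : ℚ) (ha : 1 ≤ a) (hab : a < b)
    (hn : ((a : ℚ) + b) ^ 2 - a ≤ (n : ℚ) * b)
    (htot : s + m + k ≤ n)
    (hdC0 : 0 ≤ dC) (hdC1 : (m : ℚ) * ((m : ℚ) - 1) ≤ dC)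
    (hdC2 : (m : ℚ) * ((a : ℚ) - (s : ℚ)) ≤ dC)
    (hdK0 : 0 ≤ dK)
    (hdK1 : (k : ℚ) * ((a : ℚ) * (n : ℚ) / ((a : ℚ) + (b : ℚ)) - (s : ℚ)) ≤ dK) :
    (a : ℚ) * ((m : ℚ) + (k : ℚ)) < (b : ℚ) * (s : ℚ) + dC + dK + 1 := by
  have hA0 : (0 : ℚ) < a := by exact_mod_cast ha
  have hB0 : (0 : ℚ) < b := by
    have : (0 : ℕ) < b := lt_of_le_of_lt (Nat.zero_le a) hab
    exact_mod_cast this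
  have hAB : (a : ℚ) < b := by exact_mod_cast hab
  have hABpos : (0 : ℚ) < (a : ℚ) + b := by linarith
  obtain ⟨θ, hθdef⟩ : ∃ t : ℚ, t = (a : ℚ) * n / ((a : ℚ) + b) := ⟨_, rfl⟩
  have hθ : θ * ((a : ℚ) + b) = (a : ℚ) * n := by
    rw [hθdef]; field_simp
  have hdK1' : (k : ℚ) * (θ - s) ≤ dK := by rw [hθdef]; exact hdK1
  have hMK : (m : ℚ) + k ≤ (n : ℚ) - s := by
    have : (s : ℚ) + m + k ≤ n := by exact_mod_cast htot
    linarith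
  have hS0 : (0 : ℚ) ≤ s := Nat.cast_nonneg s
  have hM0 : (0 : ℚ) ≤ m := Nat.cast_nonneg m
  have hK0 : (0 : ℚ) ≤ k := Nat.cast_nonneg k
  have hN0 : (0 : ℚ) ≤ n := Nat.cast_nonneg n
  by_cases hcase : θ ≤ (s : ℚ)
  · -- big separator case
    have h1 : (a : ℚ) * ((m : ℚ) + k) ≤ a * ((n : ℚ) - s) :=
      mul_le_mul_of_nonneg_left hMK hA0.le
    have h2 : (a : ℚ) * ((n : ℚ) - s) ≤ b * θ := by nlinarith [mul_le_mul_of_nonneg_left hcase hA0.le]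
    have h3 : (b : ℚ) * θ ≤ b * s := mul_le_mul_of_nonneg_left hcase hB0.le
    linarith
  · push_neg at hcase
    -- s < θ ; first get s ≤ n - a - b
    have hθn : θ * ((a : ℚ) + b) ≤ ((n : ℚ) - a - b) * ((a : ℚ) + b) + a := by nlinarith [hn, hθ]
    have h4 : (s : ℚ) * ((a : ℚ) + b) < (((n : ℚ) - a - b) + 1) * ((a : ℚ) + b) := by
      have h5 : (s : ℚ) * ((a : ℚ) + b) < θ * ((a : ℚ) + b) :=
        mul_lt_mul_of_pos_right hcase hABpos
      nlinarith [h5, hθn]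
    have h6 : (s : ℚ) < ((n : ℚ) - a - b) + 1 := lt_of_mul_lt_mul_right (by linarith [h4]) hABpos.le
    have hscZ : (s : ℤ) ≤ (n : ℤ) - a - b := by
      by_contra hcon
      push_neg at hcon
      have h7 : (n : ℤ) - a - b + 1 ≤ s := hcon
      have h8 : ((n : ℚ) - a - b + 1) ≤ s := by exact_mod_cast h7
      linarith
    have hsc : (s : ℚ) ≤ (n : ℚ) - a - b := by exact_mod_cast hscZ
    obtain ⟨x, hxdef⟩ : ∃ t : ℚ, t = θ - s := ⟨_, rfl⟩
    have hx0 : 0 < x := by rw [hxdef]; linarith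
    obtain ⟨c, hcdef⟩ : ∃ t : ℚ, t = (n : ℚ) - a - b - s := ⟨_, rfl⟩
    have hc0 : 0 ≤ c := by rw [hcdef]; linarith
    have hcx : x * ((a : ℚ) + b) ≤ c * ((a : ℚ) + b) + a := by
      have e1 : x * ((a : ℚ) + b) = θ * ((a : ℚ) + b) - (s : ℚ) * ((a : ℚ) + b) := by
        rw [hxdef]; ring
      have e2 : c * ((a : ℚ) + b) = ((n : ℚ) - a - b) * ((a : ℚ) + b)
          - (s : ℚ) * ((a : ℚ) + b) := by
        rw [hcdef]; ring
      rw [e1, e2]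
      linarith [hθn]
    by_cases hB1 : (a : ℚ) ≤ x
    · -- the "wide" case
      have hKA : (a : ℚ) * k ≤ dK := by
        have h7 : (k : ℚ) * a ≤ k * x := mul_le_mul_of_nonneg_left hB1 hK0
        have h8 : (k : ℚ) * x ≤ dK := by rw [hxdef]; exact hdK1'
        linarith
      have hMA : (a : ℚ) * m ≤ (b : ℚ) * s + dC := by
        by_cases hM : (m : ℚ) ≤ a
        · by_cases hSa : (s : ℚ) ≤ a
          · nlinarith [hdC2, mul_le_mul_of_nonneg_right hM hS0]
          · push_neg at hSa
            have hs1 : (a : ℚ) + 1 ≤ s := by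
              have : a < s := by exact_mod_cast hSa
              have : a + 1 ≤ s := this
              exact_mod_cast this
            have hb1 : (a : ℚ) + 1 ≤ b := by
              have : a + 1 ≤ b := hab
              exact_mod_cast this
            nlinarith [hdC0]
        · push_neg at hM
          have hm1 : (a : ℚ) + 1 ≤ m := by
            have : a < m := by exact_mod_cast hM
            have : a + 1 ≤ m := this
            exact_mod_cast this
          nlinarith [hdC1, hS0, hB0]
      linarith
    · push_neg at hB1
      -- the "tight" case
      have hKle : (k : ℚ) ≤ (n : ℚ) - s - m := by linarith
      have h8 : ((n : ℚ) - s - m) * (x - a) ≤ (k : ℚ) * (x - a) :=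
        mul_le_mul_of_nonpos_right hKle (by linarith)
      have h9 : ((n : ℚ) - s - m) * (x - a) ≤ dK - a * k := by
        have : (k : ℚ) * x ≤ dK := by rw [hxdef]; exact hdK1'
        nlinarith [h8]
      have hid : (b : ℚ) * s + ((n : ℚ) - s) * (x - a) - (m : ℚ) * (x - a) - a * m
          = x * c - m * x := by
        rw [hxdef, hcdef]; linear_combination hθ
      have hxc : x ≤ c + 1/2 := by
        have h10 : (x - c) * ((a : ℚ) + b) ≤ a := by linarith [hcx]
        nlinarith [h10, hABpos, hAB]
      have h5 : (x + 1) ^ 2 / 4 < x * c + 1 := by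
        nlinarith [sq_nonneg (3 * x - 2), mul_le_mul_of_nonneg_left hxc hx0.le,
          mul_nonneg hx0.le hc0]
      by_cases hMx : (m : ℚ) * x ≤ dC
      · nlinarith [mul_nonneg hx0.le hc0, h9, hid]
      · push_neg at hMx
        have h6' : (m : ℚ) * x - dC ≤ (x + 1) ^ 2 / 4 := by
          nlinarith [sq_nonneg (2 * (m : ℚ) - (x + 1)), hdC1]
        have h7' : 0 < x * c - m * x + dC + 1 := by linarith
        nlinarith [h9, hid, h7']


lemma gdeg_eq_card {V : Type*} [Fintype V] (H : SimpleGraph V) [DecidableRel H.Adj] (v : V) :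
    gdeg H v = (univ.filter (fun w => H.Adj v w)).card := by
  rw [gdeg, Nat.card_eq_fintype_card, ← Set.toFinset_card]
  have h : (H.neighborSet v).toFinset = univ.filter (fun w => H.Adj v w) := by
    ext w
    rw [Set.mem_toFinset]; simp
  rw [h]

theorem li_cai {V : Type*} [Fintype V] (a b n : ℕ)
    (ha : 1 ≤ a) (hab : a < b)
    (G : SimpleGraph V) (hcard : Fintype.card V = n)
    (hδ : ∀ v : V, a ≤ gdeg G v)
    (hn : (2 * (a : ℚ) + (b : ℚ) + ((a : ℚ) ^ 2 - (a : ℚ)) / (b : ℚ)) ≤ (n : ℚ))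
    (hdeg : ∀ u v : V, u ≠ v → ¬ G.Adj u v →
      ((a : ℚ) * (n : ℚ)) / ((a : ℚ) + (b : ℚ)) ≤ max (gdeg G u : ℚ) (gdeg G v : ℚ)) :
    HasIntervalFactor G a b := by
  classical
  letI : DecidableEq V := Classical.decEq V
  letI : DecidableRel G.Adj := Classical.decRel _
  have hB0 : (0 : ℚ) < b := by
    have : (0 : ℕ) < b := lt_of_le_of_lt (Nat.zero_le a) hab
    exact_mod_cast this
  have hA0 : (0 : ℚ) < a := by exact_mod_cast ha
  have hn' : ((a : ℚ) + b) ^ 2 - a ≤ (n : ℚ) * b := by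
    have h1 := mul_le_mul_of_nonneg_right hn hB0.le
    have h2 : ((a : ℚ) ^ 2 - a) / b * b = (a : ℚ) ^ 2 - a := by
      field_simp
    nlinarith [h1, h2]
  -- local degree notation
  have hcond : ∀ S T : Finset V, Disjoint S T → T.Nonempty →
      a * T.card ≤ b * S.card + ∑ t ∈ T, dGS G S t := by
    intro S T hdisj hne
    by_contra hcon
    push_neg at hcon
    set dg : V → ℕ := fun t => (univ.filter (fun w => G.Adj t w)).card with hdg
    set C : Finset V := T.filter
      (fun t => ((dg t : ℚ)) < (a : ℚ) * n / ((a : ℚ) + b)) with hCdef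
    set T' : Finset V := T.filter
      (fun t => ¬ ((dg t : ℚ)) < (a : ℚ) * n / ((a : ℚ) + b)) with hT'def
    have hTC : C.card + T'.card = T.card := Finset.card_filter_add_card_filter_not _
    have hCsub : C ⊆ T := Finset.filter_subset _ _
    have hT'sub : T' ⊆ T := Finset.filter_subset _ _
    -- C is a clique
    have hclique : ∀ t ∈ C, ∀ t' ∈ C, t ≠ t' → G.Adj t t' := by
      intro t ht t' ht' hne'
      by_contra hadj
      have h1 := hdeg t t' hne' hadj
      rw [gdeg_eq_card, gdeg_eq_card] at h1
      have h2 : ((dg t : ℚ)) < (a : ℚ) * n / ((a : ℚ) + b) := (Finset.mem_filter.1 ht).2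
      have h3 : ((dg t' : ℚ)) < (a : ℚ) * n / ((a : ℚ) + b) := (Finset.mem_filter.1 ht').2
      simp only [hdg] at h2 h3
      exact absurd h1 (not_le.2 (max_lt h2 h3))
    -- degree bounds
    have hdegS : ∀ t, dg t ≤ dGS G S t + S.card := by
      intro t
      have hsub : univ.filter (fun w => G.Adj t w)
          ⊆ (univ.filter (fun v => v ∉ S ∧ G.Adj t v)) ∪ S := by
        intro v hv
        simp only [Finset.mem_filter, Finset.mem_univ, true_and] at hv
        by_cases hvS : v ∈ S
        · exact Finset.mem_union_right _ hvS
        · exact Finset.mem_union_left _ (by simp [Finset.mem_filter, hvS, hv])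
      calc dg t ≤ ((univ.filter (fun v => v ∉ S ∧ G.Adj t v)) ∪ S).card :=
            Finset.card_le_card hsub
        _ ≤ dGS G S t + S.card := Finset.card_union_le _ _
    have hδ' : ∀ t, a ≤ dg t := by
      intro t
      have h := hδ t
      rw [gdeg_eq_card] at h
      simpa [hdg] using h
    have hCm : ∀ t ∈ C, C.card - 1 ≤ dGS G S t := by
      intro t ht
      have hsub : C.erase t ⊆ univ.filter (fun v => v ∉ S ∧ G.Adj t v) := by
        intro v hv
        have hvC : v ∈ C := Finset.mem_of_mem_erase hv
        have hvne : v ≠ t := Finset.ne_of_mem_erase hv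
        simp only [Finset.mem_filter, Finset.mem_univ, true_and]
        constructor
        · intro hvS
          exact Finset.disjoint_left.1 hdisj hvS (hCsub hvC)
        · exact (hclique v hvC t ht hvne).symm
      have := Finset.card_le_card hsub
      rwa [Finset.card_erase_of_mem ht] at this
    -- rational sums
    set dC : ℚ := ∑ t ∈ C, (dGS G S t : ℚ) with hdCdef
    set dK : ℚ := ∑ t ∈ T', (dGS G S t : ℚ) with hdKdef
    have hdC0 : 0 ≤ dC := Finset.sum_nonneg (fun t _ => Nat.cast_nonneg _)
    have hdK0 : 0 ≤ dK := Finset.sum_nonneg (fun t _ => Nat.cast_nonneg _)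
    have hdC1 : (C.card : ℚ) * ((C.card : ℚ) - 1) ≤ dC := by
      have hper : ∀ t ∈ C, (C.card : ℚ) - 1 ≤ (dGS G S t : ℚ) := by
        intro t ht
        have h1 : 1 ≤ C.card := Finset.card_pos.2 ⟨t, ht⟩
        have h2 := hCm t ht
        have h3 : ((C.card - 1 : ℕ) : ℚ) ≤ (dGS G S t : ℚ) := Nat.cast_le.2 h2
        rwa [Nat.cast_sub h1, Nat.cast_one] at h3
      have := Finset.card_nsmul_le_sum C _ _ hper
      rwa [nsmul_eq_mul] at this
    have hdC2 : (C.card : ℚ) * ((a : ℚ) - S.card) ≤ dC := by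
      have hper : ∀ t ∈ C, (a : ℚ) - S.card ≤ (dGS G S t : ℚ) := by
        intro t _
        have h1 : a ≤ dGS G S t + S.card := le_trans (hδ' t) (hdegS t)
        have h2 : (a : ℚ) ≤ ((dGS G S t + S.card : ℕ) : ℚ) := Nat.cast_le.2 h1
        push_cast at h2
        linarith
      have := Finset.card_nsmul_le_sum C _ _ hper
      rwa [nsmul_eq_mul] at this
    have hdK1 : (T'.card : ℚ) * ((a : ℚ) * n / ((a : ℚ) + b) - S.card) ≤ dK := by
      have hper : ∀ t ∈ T', (a : ℚ) * n / ((a : ℚ) + b) - S.card ≤ (dGS G S t : ℚ) := by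
        intro t ht
        have h1 : ¬ ((dg t : ℚ)) < (a : ℚ) * n / ((a : ℚ) + b) := (Finset.mem_filter.1 ht).2
        push_neg at h1
        have h2 : dg t ≤ dGS G S t + S.card := hdegS t
        have h3 : ((dg t : ℕ) : ℚ) ≤ ((dGS G S t + S.card : ℕ) : ℚ) := Nat.cast_le.2 h2
        push_cast at h3
        linarith
      have := Finset.card_nsmul_le_sum T' _ _ hper
      rwa [nsmul_eq_mul] at this
    have htot : S.card + C.card + T'.card ≤ n := by
      have h1 : (S ∪ T).card = S.card + T.card := Finset.card_union_of_disjoint hdisj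
      have h2 : (S ∪ T).card ≤ Fintype.card V := Finset.card_le_univ _
      rw [hcard] at h2
      omega
    have hkey := keynum a b n S.card C.card T'.card dC dK ha hab hn' htot
      hdC0 hdC1 hdC2 hdK0 hdK1
    -- contradiction with hcon
    have hsplit : ∑ t ∈ T, (dGS G S t : ℚ) = dC + dK := by
      rw [hdCdef, hdKdef, hCdef, hT'def]
      exact (Finset.sum_filter_add_sum_filter_not T _ _).symm
    have hconQ : (b : ℚ) * S.card + (dC + dK) + 1 ≤ (a : ℚ) * T.card := by
      have h1 : b * S.card + (∑ t ∈ T, dGS G S t) + 1 ≤ a * T.card := hcon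
      have h2 : ((b * S.card + (∑ t ∈ T, dGS G S t) + 1 : ℕ) : ℚ)
          ≤ ((a * T.card : ℕ) : ℚ) := Nat.cast_le.2 h1
      push_cast at h2
      rw [← hsplit]
      push_cast
      linarith
    have hTQ : ((T.card : ℚ)) = (C.card : ℚ) + T'.card := by
      exact_mod_cast hTC.symm
    rw [hTQ] at hconQ
    linarith
  obtain ⟨R, hadj, hsym, hdegs⟩ := exists_factor_of_cond G a b ha hab hcond
  let F : SimpleGraph V :=
    { Adj := fun u v => (u, v) ∈ R
      symm := ⟨fun u v h => hsym (u, v) h⟩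
      loopless := ⟨fun v h => G.loopless.irrefl v (hadj (v, v) h)⟩ }
  letI : DecidableRel F.Adj := fun u v => (inferInstance : Decidable ((u, v) ∈ R))
  refine ⟨F, fun u v h => hadj (u, v) h, fun v => ?_⟩
  have hF : gdeg F v = degR R v := by
    rw [gdeg_eq_card, degR]
  rw [hF]
  exact hdegs v
end

section
/- Let a ≤ b be positive integers with a ≡ b (mod 2) and let G be a simple graph. For disjoint S, T ⊆ V(G) define η(S,T) = b|S| − a|T| + Σ_{x∈T} deg_{G−S}(x) − q(S,T), where q(S,T) is the number of connected components C of G − S − T with a·|V(C)| + e_G(V(C), T) odd, and let U(S,T) denote the union of the vertex sets of these components. Suppose (S,T) is a pair of disjoint subsets with η(S,T) ≤ −2, chosen so that |U(S,T)| is minimal among all such pairs. Then every vertex u ∈ U(S,T) satisfies deg_{G−S}(u) ≥ a + 1 and e_G({u}, T) ≤ b − 1. -/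
open SimpleGraph

/-- The degree of `x` in `G - S`, i.e. the number of neighbors of `x` outside `S`. -/
noncomputable def degOutside {V : Type*} (G : SimpleGraph V) (S : Set V) (x : V) : ℕ :=
  Nat.card ↥(G.neighborSet x \ S)

/-- `e_G(A, B)`: the number of edges of `G` with one endpoint in `A` and the other in `B`. -/
noncomputable def eCount {V : Type*} (G : SimpleGraph V) (A B : Set V) : ℕ :=
  Nat.card {e : Sym2 V // e ∈ G.edgeSet ∧ ∃ u ∈ A, ∃ v ∈ B, e = s(u, v)}

/-- `q(S,T)`: the number of connected components `C` of `G - S - T` with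
`a * |V(C)| + e_G(V(C), T)` odd. -/
noncomputable def qab {V : Type*} (G : SimpleGraph V) (a : ℕ) (S T : Set V) : ℕ :=
  Nat.card {C : (G.induce (S ∪ T)ᶜ).ConnectedComponent //
    Odd (a * Nat.card C.supp + eCount G (Subtype.val '' C.supp) T)}

/-- `η(S,T) = b|S| − a|T| + ∑_{x∈T} deg_{G−S}(x) − q(S,T)`. -/
noncomputable def etaab {V : Type*} (G : SimpleGraph V) (a b : ℕ) (S T : Set V) : ℤ :=
  (b : ℤ) * Nat.card S - (a : ℤ) * Nat.card T
    + (∑ᶠ x ∈ T, (degOutside G S x : ℤ)) - (qab G a S T : ℤ)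

/-- `U(S,T)`: the union of the vertex sets of the components counted by `q(S,T)`. -/
noncomputable def USet {V : Type*} (G : SimpleGraph V) (a : ℕ) (S T : Set V) : Set V :=
  ⋃ C : {C : (G.induce (S ∪ T)ᶜ).ConnectedComponent //
      Odd (a * Nat.card C.supp + eCount G (Subtype.val '' C.supp) T)},
    Subtype.val '' (C : (G.induce (S ∪ T)ᶜ).ConnectedComponent).supp

set_option linter.unusedSectionVars false
set_option linter.unusedVariables false

lemma card_subtype_or_disjoint {α : Type*} [Finite α] (p q : α → Prop)
    (h : ∀ x, p x → q x → False) :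
    Nat.card {x // p x ∨ q x} = Nat.card {x // p x} + Nat.card {x // q x} := by
  classical
  have hdisj : Disjoint p q := by
    simp only [Pi.disjoint_iff]
    intro x
    rw [Prop.disjoint_iff]
    exact fun hpq => h x hpq.1 hpq.2
  rw [Nat.card_congr (subtypeOrEquiv p q hdisj), Nat.card_sum]

lemma card_odd_mod_two {α : Type*} [Fintype α] (g : α → ℕ) :
    Nat.card {x // Odd (g x)} % 2 = (∑ x, g x) % 2 := by
  classical
  rw [Nat.card_eq_fintype_card, Fintype.card_subtype, Finset.sum_nat_mod, Finset.card_filter]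
  congr 1
  refine Finset.sum_congr rfl fun x _ => ?_
  rcases Nat.even_or_odd (g x) with h | h
  · simp [Nat.not_odd_iff_even.2 h, Nat.even_iff.1 h]
  · simp [h, Nat.odd_iff.1 h]

lemma eCount_comm {V : Type*} (G : SimpleGraph V) (A B : Set V) :
    eCount G A B = eCount G B A := by
  apply Nat.card_congr (Equiv.subtypeEquivRight _)
  intro e
  constructor <;> rintro ⟨he, x, hx, y, hy, rfl⟩ <;>
    exact ⟨he, y, hy, x, hx, Sym2.eq_swap⟩

lemma eCount_eq_zero {V : Type*} (G : SimpleGraph V) (A B : Set V)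
    (h : ∀ x ∈ A, ∀ y ∈ B, ¬ G.Adj x y) : eCount G A B = 0 := by
  refine Nat.card_eq_zero.2 (Or.inl ⟨fun e => ?_⟩)
  obtain ⟨e, he, x, hx, y, hy, rfl⟩ := e
  exact h x hx y hy he

lemma eCount_singleton {V : Type*} [Fintype V] (G : SimpleGraph V) (u : V) (B : Set V)
    (hu : u ∉ B) :
    eCount G {u} B = Nat.card ↥(G.neighborSet u ∩ B) := by
  refine (Nat.card_congr (Equiv.ofBijective
    (f := fun v : ↥(G.neighborSet u ∩ B) =>
      (⟨s(u, v.1), v.2.1, u, rfl, v.1, v.2.2, rfl⟩ :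
        {e : Sym2 V // e ∈ G.edgeSet ∧ ∃ x ∈ ({u} : Set V), ∃ y ∈ B, e = s(x, y)}))
    ⟨?_, ?_⟩)).symm
  · rintro ⟨v, hv⟩ ⟨w, hw⟩ hvw
    simp only [Subtype.mk.injEq, Sym2.congr_right] at hvw
    exact Subtype.ext hvw
  · rintro ⟨e, he, x, hx, y, hy, rfl⟩
    rcases hx with rfl
    have hadj : G.Adj x y := he
    refine ⟨⟨y, hadj, hy⟩, ?_⟩
    rfl

lemma eCount_union_left {V : Type*} [Fintype V] (G : SimpleGraph V) (A₁ A₂ B : Set V)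
    (h12 : Disjoint A₁ A₂) (h1B : Disjoint A₁ B) (h2B : Disjoint A₂ B) :
    eCount G (A₁ ∪ A₂) B = eCount G A₁ B + eCount G A₂ B := by
  classical
  unfold eCount
  rw [← card_subtype_or_disjoint
    (fun e : Sym2 V => e ∈ G.edgeSet ∧ ∃ u ∈ A₁, ∃ v ∈ B, e = s(u, v))
    (fun e : Sym2 V => e ∈ G.edgeSet ∧ ∃ u ∈ A₂, ∃ v ∈ B, e = s(u, v)) ?_]
  · apply Nat.card_congr (Equiv.subtypeEquivRight _)
    intro e
    constructor
    · rintro ⟨he, x, hx | hx, y, hy, rfl⟩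
      exacts [Or.inl ⟨he, x, hx, y, hy, rfl⟩, Or.inr ⟨he, x, hx, y, hy, rfl⟩]
    · rintro (⟨he, x, hx, y, hy, rfl⟩ | ⟨he, x, hx, y, hy, rfl⟩)
      exacts [⟨he, x, Or.inl hx, y, hy, rfl⟩, ⟨he, x, Or.inr hx, y, hy, rfl⟩]
  · rintro e ⟨he, x₁, hx₁, y₁, hy₁, rfl⟩ ⟨_, x₂, hx₂, y₂, hy₂, heq⟩
    rw [Sym2.eq_iff] at heq
    rcases heq with ⟨rfl, rfl⟩ | ⟨rfl, rfl⟩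
    · exact Set.disjoint_left.1 h12 hx₁ hx₂
    · exact Set.disjoint_left.1 h1B hx₁ hy₂

lemma eCount_union_right {V : Type*} [Fintype V] (G : SimpleGraph V) (A B₁ B₂ : Set V)
    (h12 : Disjoint B₁ B₂) (h1 : Disjoint A B₁) (h2 : Disjoint A B₂) :
    eCount G A (B₁ ∪ B₂) = eCount G A B₁ + eCount G A B₂ := by
  rw [eCount_comm, eCount_union_left G B₁ B₂ A h12 h1.symm h2.symm,
    eCount_comm G B₁ A, eCount_comm G B₂ A]

lemma eCount_biUnion {V : Type*} [Fintype V] (G : SimpleGraph V) {ι : Type*}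
    (s : Finset ι) (A : ι → Set V) (B : Set V)
    (hd : ∀ i ∈ s, ∀ j ∈ s, i ≠ j → Disjoint (A i) (A j))
    (hB : ∀ i ∈ s, Disjoint (A i) B) :
    eCount G (⋃ i ∈ s, A i) B = ∑ i ∈ s, eCount G (A i) B := by
  classical
  induction s using Finset.induction with
  | empty => simp [eCount_eq_zero]
  | @insert a s hnot ih =>
    rw [Finset.set_biUnion_insert, Finset.sum_insert hnot,
      eCount_union_left G _ _ B ?_ (hB a (Finset.mem_insert_self a s)) ?_,
      ih (fun i hi j hj hij => hd i (Finset.mem_insert_of_mem hi) j (Finset.mem_insert_of_mem hj) hij)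
        (fun i hi => hB i (Finset.mem_insert_of_mem hi))]
    · rw [Set.disjoint_iUnion_right]
      intro i
      rw [Set.disjoint_iUnion_right]
      intro hi
      exact hd a (Finset.mem_insert_self a s) i (Finset.mem_insert_of_mem hi)
        (fun h => hnot (h ▸ hi))
    · rw [Set.disjoint_left]
      rintro x hx hxB
      simp only [Set.mem_iUnion] at hx
      obtain ⟨i, hi, hxi⟩ := hx
      exact Set.disjoint_left.1 (hB i (Finset.mem_insert_of_mem hi)) hxi hxB

lemma ncard_biUnion {α : Type*} [Finite α] {ι : Type*}
    (s : Finset ι) (A : ι → Set α)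
    (hd : ∀ i ∈ s, ∀ j ∈ s, i ≠ j → Disjoint (A i) (A j)) :
    (⋃ i ∈ s, A i).ncard = ∑ i ∈ s, (A i).ncard := by
  classical
  induction s using Finset.induction with
  | empty => simp
  | @insert a s hnot ih =>
    rw [Finset.set_biUnion_insert, Finset.sum_insert hnot,
      Set.ncard_union_eq ?_ (Set.toFinite _) (Set.toFinite _),
      ih (fun i hi j hj hij => hd i (Finset.mem_insert_of_mem hi) j (Finset.mem_insert_of_mem hj) hij)]
    rw [Set.disjoint_iUnion_right]
    intro i
    rw [Set.disjoint_iUnion_right]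
    intro hi
    exact hd a (Finset.mem_insert_self a s) i (Finset.mem_insert_of_mem hi)
      (fun h => hnot (h ▸ hi))

lemma nat_card_val_image {α : Type*} {s : Set α} (t : Set ↥s) :
    (Subtype.val '' t).ncard = Nat.card ↥t := by
  rw [Set.ncard_image_of_injective _ Subtype.val_injective, Nat.card_coe_set_eq]


section Components
variable {V : Type*} [Fintype V] (G : SimpleGraph V)

/-- The inclusion homomorphism from `G.induce (insert u R)ᶜ` to `G.induce Rᶜ`. -/
def inclHom (R : Set V) (u : V) : G.induce (insert u R)ᶜ →g G.induce Rᶜ where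
  toFun x := ⟨x.1, fun hx => x.2 (Set.mem_insert_of_mem u hx)⟩
  map_rel' := fun h => h

lemma lift_reachable (R : Set V) (u : V) {x y : ↥(Rᶜ)}
    (p : (G.induce Rᶜ).Walk x y) (hp : ∀ z ∈ p.support, (z : V) ≠ u)
    (hx : x.1 ∉ insert u R) (hy : y.1 ∉ insert u R) :
    (G.induce (insert u R)ᶜ).Reachable ⟨x.1, hx⟩ ⟨y.1, hy⟩ := by
  induction p with
  | nil => exact Reachable.refl _
  | @cons c d e h q ih =>
    have hd : d.1 ∉ insert u R := by
      intro hmem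
      rcases Set.mem_insert_iff.1 hmem with h1 | h1
      · exact hp d (by simp [Walk.support_cons, Walk.start_mem_support]) h1
      · exact d.2 h1
    have h1 : (G.induce (insert u R)ᶜ).Adj ⟨c.1, hx⟩ ⟨d.1, hd⟩ := h
    refine (h1.reachable).trans (ih ?_ hd hy)
    intro z hz
    exact hp z (by simp [Walk.support_cons, hz])

variable (R : Set V) (u : V) (huR : u ∉ R)

lemma supp_sub_map (D : (G.induce (insert u R)ᶜ).ConnectedComponent) :
    Subtype.val '' D.supp ⊆ Subtype.val '' (D.map (inclHom G R u)).supp := by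
  rintro _ ⟨d, hd, rfl⟩
  refine ⟨inclHom G R u d, ?_, rfl⟩
  rw [ConnectedComponent.mem_supp_iff, ← hd, ConnectedComponent.map_mk]

lemma not_mem_supp (D : (G.induce (insert u R)ᶜ).ConnectedComponent) :
    u ∉ Subtype.val '' D.supp := by
  rintro ⟨d, -, heq⟩
  exact d.2 (by rw [heq]; exact Set.mem_insert _ _)

lemma map_ne_Cu_inj {D₁ D₂ : (G.induce (insert u R)ᶜ).ConnectedComponent}
    (heq : D₁.map (inclHom G R u) = D₂.map (inclHom G R u))
    (hne : D₁.map (inclHom G R u) ≠ (G.induce Rᶜ).connectedComponentMk ⟨u, huR⟩) :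
    D₁ = D₂ := by
  classical
  revert heq hne
  refine ConnectedComponent.ind₂ (fun x₁ x₂ heq hne => ?_) D₁ D₂
  rw [ConnectedComponent.map_mk, ConnectedComponent.map_mk, ConnectedComponent.eq] at heq
  obtain ⟨p⟩ := heq
  have hsup : ∀ z ∈ p.support, (z : V) ≠ u := by
    intro z hz hzu
    apply hne
    rw [ConnectedComponent.map_mk, ConnectedComponent.eq]
    have : z = (⟨u, huR⟩ : ↥(Rᶜ)) := Subtype.ext hzu
    exact this ▸ (p.takeUntil z hz).reachable
  have h2 := lift_reachable G R u p hsup x₁.2 x₂.2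
  rw [ConnectedComponent.eq]
  have e₁ : (⟨((inclHom G R u) x₁ : ↥(Rᶜ)).1, x₁.2⟩ : ↥((insert u R)ᶜ)) = x₁ := Subtype.ext rfl
  have e₂ : (⟨((inclHom G R u) x₂ : ↥(Rᶜ)).1, x₂.2⟩ : ↥((insert u R)ᶜ)) = x₂ := Subtype.ext rfl
  exact e₁ ▸ e₂ ▸ h2

lemma map_mk_eq (x : ↥(Rᶜ)) (hx : x.1 ∉ insert u R) :
    ((G.induce (insert u R)ᶜ).connectedComponentMk ⟨x.1, hx⟩).map (inclHom G R u)
      = (G.induce Rᶜ).connectedComponentMk x := by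
  rw [ConnectedComponent.map_mk]
  congr 1

lemma mk_u_eq (x : ↥(Rᶜ)) (hxu : x.1 = u) :
    (G.induce Rᶜ).connectedComponentMk x = (G.induce Rᶜ).connectedComponentMk ⟨u, huR⟩ := by
  congr 1
  exact Subtype.ext hxu

lemma supp_eq_of_ne {D : (G.induce (insert u R)ᶜ).ConnectedComponent}
    (hne : D.map (inclHom G R u) ≠ (G.induce Rᶜ).connectedComponentMk ⟨u, huR⟩) :
    Subtype.val '' D.supp = Subtype.val '' (D.map (inclHom G R u)).supp := by
  refine le_antisymm (supp_sub_map G R u D) ?_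
  rintro _ ⟨d, hd, rfl⟩
  have hdu : d.1 ≠ u := by
    intro h
    exact hne ((ConnectedComponent.mem_supp_iff _ _).1 hd ▸ (mk_u_eq G R u huR d h))
  have hd' : d.1 ∉ insert u R := by
    intro hmem
    rcases Set.mem_insert_iff.1 hmem with h1 | h1
    exacts [hdu h1, d.2 h1]
  have hmap : ((G.induce (insert u R)ᶜ).connectedComponentMk ⟨d.1, hd'⟩).map (inclHom G R u)
      = D.map (inclHom G R u) := by
    rw [map_mk_eq G R u d hd', (ConnectedComponent.mem_supp_iff _ _).1 hd]
  have := map_ne_Cu_inj G R u huR hmap (hmap ▸ hne)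
  exact ⟨⟨d.1, hd'⟩, this, rfl⟩

lemma supp_partition :
    Subtype.val '' ((G.induce Rᶜ).connectedComponentMk ⟨u, huR⟩).supp \ {u}
      = ⋃ D : {D : (G.induce (insert u R)ᶜ).ConnectedComponent //
          D.map (inclHom G R u) = (G.induce Rᶜ).connectedComponentMk ⟨u, huR⟩},
        Subtype.val '' (D : (G.induce (insert u R)ᶜ).ConnectedComponent).supp := by
  ext x
  constructor
  · rintro ⟨⟨d, hd, rfl⟩, hxu⟩
    have hxu' : d.1 ≠ u := by simpa using hxu
    have hd' : d.1 ∉ insert u R := by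
      intro hmem
      rcases Set.mem_insert_iff.1 hmem with h1 | h1
      exacts [hxu' h1, d.2 h1]
    refine Set.mem_iUnion.2 ⟨⟨(G.induce (insert u R)ᶜ).connectedComponentMk ⟨d.1, hd'⟩, ?_⟩,
      ⟨⟨d.1, hd'⟩, rfl, rfl⟩⟩
    rw [map_mk_eq G R u d hd', (ConnectedComponent.mem_supp_iff _ _).1 hd]
  · intro hx
    obtain ⟨⟨D, hD⟩, hxD⟩ := Set.mem_iUnion.1 hx
    refine ⟨hD ▸ supp_sub_map G R u D hxD, fun hxu => ?_⟩
    have hxu' : x = u := hxu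
    exact not_mem_supp G R u D (hxu' ▸ hxD)

lemma supp_disj {s : Set V} {D₁ D₂ : (G.induce s).ConnectedComponent} (h : D₁ ≠ D₂) :
    Disjoint (Subtype.val '' D₁.supp) (Subtype.val '' D₂.supp) := by
  rw [Set.disjoint_left]
  rintro x ⟨d₁, hd₁, rfl⟩ ⟨d₂, hd₂, heq⟩
  have he : d₂ = d₁ := Subtype.ext heq
  exact h (((ConnectedComponent.mem_supp_iff _ _).1 hd₁).symm.trans
    (he ▸ (ConnectedComponent.mem_supp_iff _ _).1 hd₂))

lemma no_adj_of_ne {C : (G.induce Rᶜ).ConnectedComponent}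
    (hne : C ≠ (G.induce Rᶜ).connectedComponentMk ⟨u, huR⟩) :
    eCount G (Subtype.val '' C.supp) {u} = 0 := by
  apply eCount_eq_zero
  rintro _ ⟨d, hd, rfl⟩ y hy hadj
  have hy' : y = u := hy
  have hadj' : (G.induce Rᶜ).Adj d ⟨u, huR⟩ := hy' ▸ hadj
  exact hne (((ConnectedComponent.mem_supp_iff _ _).1 hd).symm.trans
    (ConnectedComponent.eq.2 hadj'.reachable))

lemma neighborSet_inter :
    G.neighborSet u ∩ Rᶜ
      = G.neighborSet u ∩
        (Subtype.val '' ((G.induce Rᶜ).connectedComponentMk ⟨u, huR⟩).supp \ {u}) := by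
  ext v
  constructor
  · rintro ⟨hadj, hvR⟩
    have hadj' : (G.induce Rᶜ).Adj ⟨v, hvR⟩ ⟨u, huR⟩ := G.adj_symm hadj
    refine ⟨hadj, ⟨⟨v, hvR⟩, ConnectedComponent.eq.2 hadj'.reachable, rfl⟩, fun hvu => ?_⟩
    have hvu' : v = u := hvu
    exact G.ne_of_adj hadj (hvu'.symm)
  · rintro ⟨hadj, ⟨d, -, rfl⟩, -⟩
    exact ⟨hadj, d.2⟩

end Components


set_option maxHeartbeats 1000000 in
lemma key_count {V : Type*} [Fintype V] (G : SimpleGraph V) (a : ℕ) (R : Set V) (u : V)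
    (huR : u ∉ R) (T T' : Set V) (hT'R : T' ⊆ insert u R)
    (hC : ∀ C : (G.induce Rᶜ).ConnectedComponent,
      C ≠ (G.induce Rᶜ).connectedComponentMk ⟨u, huR⟩ →
      eCount G (Subtype.val '' C.supp) T' = eCount G (Subtype.val '' C.supp) T)
    (hodd : Odd (a * Nat.card ((G.induce Rᶜ).connectedComponentMk ⟨u, huR⟩).supp
      + eCount G (Subtype.val '' ((G.induce Rᶜ).connectedComponentMk ⟨u, huR⟩).supp) T)) :
    ∃ k : ℕ,
      k % 2 = (a * ((Subtype.val '' ((G.induce Rᶜ).connectedComponentMk ⟨u, huR⟩).supp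
            \ {u}).ncard)
        + eCount G (Subtype.val '' ((G.induce Rᶜ).connectedComponentMk ⟨u, huR⟩).supp
            \ {u}) T') % 2 ∧
      Nat.card {C : (G.induce (insert u R)ᶜ).ConnectedComponent //
          Odd (a * Nat.card C.supp + eCount G (Subtype.val '' C.supp) T')} + 1
        = Nat.card {C : (G.induce Rᶜ).ConnectedComponent //
          Odd (a * Nat.card C.supp + eCount G (Subtype.val '' C.supp) T)} + k ∧
      (⋃ C : {C : (G.induce (insert u R)ᶜ).ConnectedComponent //
          Odd (a * Nat.card C.supp + eCount G (Subtype.val '' C.supp) T')},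
        Subtype.val '' (C : (G.induce (insert u R)ᶜ).ConnectedComponent).supp) ⊆
      (⋃ C : {C : (G.induce Rᶜ).ConnectedComponent //
          Odd (a * Nat.card C.supp + eCount G (Subtype.val '' C.supp) T)},
        Subtype.val '' (C : (G.induce Rᶜ).ConnectedComponent).supp) \ {u} := by
  classical
  set Cu := (G.induce Rᶜ).connectedComponentMk ⟨u, huR⟩ with hCudef
  set φ : (G.induce (insert u R)ᶜ).ConnectedComponent → (G.induce Rᶜ).ConnectedComponent :=
    fun D => D.map (inclHom G R u) with hφdef
  set f : (G.induce Rᶜ).ConnectedComponent → ℕ :=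
    fun C => a * Nat.card C.supp + eCount G (Subtype.val '' C.supp) T with hfdef
  set f' : (G.induce (insert u R)ᶜ).ConnectedComponent → ℕ :=
    fun D => a * Nat.card D.supp + eCount G (Subtype.val '' D.supp) T' with hf'def
  have cardconv : ∀ {s : Set V} (D : (G.induce s).ConnectedComponent),
      Nat.card D.supp = (Subtype.val '' D.supp).ncard := by
    intro s D
    rw [Set.ncard_image_of_injective _ Subtype.val_injective, Nat.card_coe_set_eq]
  have hf'_eq : ∀ D, φ D ≠ Cu → f' D = f (φ D) := by
    intro D hne
    have hsupp := supp_eq_of_ne G R u huR hne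
    simp only [hf'def, hfdef]
    rw [cardconv, cardconv, hsupp, hC (φ D) hne]
  -- decomposition of q'
  have hq' : Nat.card {D : (G.induce (insert u R)ᶜ).ConnectedComponent // Odd (f' D)}
      = Nat.card {D // φ D = Cu ∧ Odd (f' D)} + Nat.card {D // φ D ≠ Cu ∧ Odd (f' D)} := by
    rw [← card_subtype_or_disjoint _ _ (fun D h1 h2 => h2.1 h1.1)]
    apply Nat.card_congr (Equiv.subtypeEquivRight _)
    intro D
    by_cases h : φ D = Cu <;> tauto
  -- decomposition of q
  have hq : Nat.card {C : (G.induce Rᶜ).ConnectedComponent // Odd (f C)}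
      = Nat.card {C // C = Cu ∧ Odd (f C)} + Nat.card {C // C ≠ Cu ∧ Odd (f C)} := by
    rw [← card_subtype_or_disjoint _ _ (fun C h1 h2 => h2.1 h1.1)]
    apply Nat.card_congr (Equiv.subtypeEquivRight _)
    intro C
    by_cases h : C = Cu <;> tauto
  have hone : Nat.card {C : (G.induce Rᶜ).ConnectedComponent // C = Cu ∧ Odd (f C)} = 1 := by
    rw [Nat.card_eq_one_iff_unique]
    constructor
    · constructor
      rintro ⟨C, rfl, -⟩ ⟨C', h', -⟩
      exact Subtype.ext h'.symm
    · exact ⟨⟨Cu, rfl, hodd⟩⟩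
  have hB : Nat.card {D : (G.induce (insert u R)ᶜ).ConnectedComponent // φ D ≠ Cu ∧ Odd (f' D)}
      = Nat.card {C : (G.induce Rᶜ).ConnectedComponent // C ≠ Cu ∧ Odd (f C)} := by
    apply Nat.card_congr
    refine Equiv.ofBijective
      (fun D => ⟨φ D.1, D.2.1, hf'_eq D.1 D.2.1 ▸ D.2.2⟩) ⟨?_, ?_⟩
    · rintro ⟨D₁, h₁, o₁⟩ ⟨D₂, h₂, o₂⟩ h
      have hvv : φ D₁ = φ D₂ := congrArg Subtype.val h
      exact Subtype.ext (map_ne_Cu_inj G R u huR hvv h₁)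
    · rintro ⟨C, hne, ho⟩
      revert hne ho
      refine ConnectedComponent.ind (fun x hne ho => ?_) C
      have hxu : x.1 ≠ u := fun h => hne (mk_u_eq G R u huR x h)
      have hx' : x.1 ∉ insert u R := by
        intro hmem
        rcases Set.mem_insert_iff.1 hmem with h1 | h1
        exacts [hxu h1, x.2 h1]
      have hmap : φ ((G.induce (insert u R)ᶜ).connectedComponentMk ⟨x.1, hx'⟩)
          = (G.induce Rᶜ).connectedComponentMk x := map_mk_eq G R u x hx'
      have hne' : φ ((G.induce (insert u R)ᶜ).connectedComponentMk ⟨x.1, hx'⟩) ≠ Cu := by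
        rw [hmap]; exact hne
      refine ⟨⟨(G.induce (insert u R)ᶜ).connectedComponentMk ⟨x.1, hx'⟩, hne', ?_⟩, ?_⟩
      · rw [hf'_eq _ hne', hmap]; exact ho
      · exact Subtype.ext hmap
  -- the parity of the fiber count
  have hk2 : Nat.card {D : (G.induce (insert u R)ᶜ).ConnectedComponent // φ D = Cu ∧ Odd (f' D)} % 2
      = (a * ((Subtype.val '' Cu.supp \ {u}).ncard)
        + eCount G (Subtype.val '' Cu.supp \ {u}) T') % 2 := by
    have e1 : Nat.card {D : (G.induce (insert u R)ᶜ).ConnectedComponent // φ D = Cu ∧ Odd (f' D)}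
        = Nat.card {E : {D : (G.induce (insert u R)ᶜ).ConnectedComponent // φ D = Cu} //
            Odd (f' E.1)} :=
      (Nat.card_congr (Equiv.subtypeSubtypeEquivSubtypeInter _ _)).symm
    rw [e1]
    letI : Fintype {D : (G.induce (insert u R)ᶜ).ConnectedComponent // φ D = Cu} :=
      Fintype.ofFinite _
    rw [card_odd_mod_two]
    have hdisjsupp : ∀ (i : {D : (G.induce (insert u R)ᶜ).ConnectedComponent // φ D = Cu}),
        i ∈ Finset.univ → ∀ (j : {D : (G.induce (insert u R)ᶜ).ConnectedComponent // φ D = Cu}),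
        j ∈ Finset.univ → i ≠ j →
        Disjoint (Subtype.val '' i.1.supp) (Subtype.val '' j.1.supp) := by
      intro i _ j _ hij
      exact supp_disj G (fun h => hij (Subtype.ext h))
    have hpart : (⋃ E ∈ (Finset.univ : Finset {D : (G.induce (insert u R)ᶜ).ConnectedComponent //
          φ D = Cu}), Subtype.val '' E.1.supp) = Subtype.val '' Cu.supp \ {u} := by
      rw [supp_partition G R u huR]
      simp
      rfl
    have hsum : ∑ E : {D : (G.induce (insert u R)ᶜ).ConnectedComponent // φ D = Cu}, f' E.1
        = a * ((Subtype.val '' Cu.supp \ {u}).ncard)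
          + eCount G (Subtype.val '' Cu.supp \ {u}) T' := by
      have : ∀ E : {D : (G.induce (insert u R)ᶜ).ConnectedComponent // φ D = Cu},
          f' E.1 = a * (Subtype.val '' E.1.supp).ncard
            + eCount G (Subtype.val '' E.1.supp) T' := by
        intro E
        simp only [hf'def]
        rw [cardconv]
      rw [Finset.sum_congr rfl (fun E _ => this E), Finset.sum_add_distrib, ← Finset.mul_sum]
      rw [← ncard_biUnion Finset.univ _ hdisjsupp, ← eCount_biUnion G Finset.univ _ T' hdisjsupp ?_,
        hpart]
      · intro i _
        rw [Set.disjoint_left]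
        rintro x ⟨d, -, rfl⟩ hxT'
        exact d.2 (hT'R hxT')
    rw [hsum]
  refine ⟨Nat.card {D : (G.induce (insert u R)ᶜ).ConnectedComponent // φ D = Cu ∧ Odd (f' D)},
    hk2, ?_, ?_⟩
  · rw [hq', hq, hone, hB]; ring
  · rintro x hx
    obtain ⟨⟨D, hD⟩, hxD⟩ := Set.mem_iUnion.1 hx
    have hxu : x ≠ u := by
      intro h
      exact not_mem_supp G R u D (h ▸ hxD)
    by_cases h : φ D = Cu
    · refine ⟨Set.mem_iUnion.2 ⟨⟨Cu, hodd⟩, ?_⟩, hxu⟩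
      show x ∈ Subtype.val '' Cu.supp
      rw [← h]
      exact supp_sub_map G R u D hxD
    · refine ⟨Set.mem_iUnion.2 ⟨⟨φ D, ?_⟩, ?_⟩, hxu⟩
      · show Odd (f (φ D))
        rw [← hf'_eq D h]
        exact hD
      · exact supp_sub_map G R u D hxD

set_option maxHeartbeats 2000000 in
theorem claim1 {V : Type*} [Fintype V] (G : SimpleGraph V) (a b : ℕ)
    (ha : 0 < a) (hab : a ≤ b) (hparity : a % 2 = b % 2)
    (S T : Set V) (hdisj : Disjoint S T) (heta : etaab G a b S T ≤ -2)
    (hmin : ∀ S' T' : Set V, Disjoint S' T' → etaab G a b S' T' ≤ -2 →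
      Nat.card (USet G a S T) ≤ Nat.card (USet G a S' T')) :
    ∀ u ∈ USet G a S T, a + 1 ≤ degOutside G S u ∧ eCount G {u} T ≤ b - 1 := by
  classical
  intro u hu
  obtain ⟨⟨C0, hoddC0⟩, hxC0⟩ := Set.mem_iUnion.1 hu
  obtain ⟨d0, hd0, hdu0⟩ := hxC0
  have huR : u ∉ S ∪ T := hdu0 ▸ d0.2
  have huS : u ∉ S := fun h => huR (Or.inl h)
  have huT : u ∉ T := fun h => huR (Or.inr h)
  have hC0eq : C0 = (G.induce (S ∪ T)ᶜ).connectedComponentMk ⟨u, huR⟩ :=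
    ((ConnectedComponent.mem_supp_iff _ _).1 hd0).symm.trans (mk_u_eq G (S ∪ T) u huR d0 hdu0)
  set Cu := (G.induce (S ∪ T)ᶜ).connectedComponentMk ⟨u, huR⟩ with hCudef
  have hoddCu : Odd (a * Nat.card Cu.supp + eCount G (Subtype.val '' Cu.supp) T) :=
    hC0eq ▸ hoddC0
  have hum : u ∈ Subtype.val '' Cu.supp := ⟨⟨u, huR⟩, rfl, rfl⟩
  set A := Subtype.val '' Cu.supp \ {u} with hAdef
  have hAsub : A ⊆ (S ∪ T)ᶜ := by
    rintro x ⟨⟨d, -, rfl⟩, -⟩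
    exact d.2
  have huA : u ∉ A := fun h => h.2 rfl
  have hCusub : Subtype.val '' Cu.supp ⊆ (S ∪ T)ᶜ := by
    rintro _ ⟨d, -, rfl⟩
    exact d.2
  have hdisjAT : Disjoint A T := Set.disjoint_left.2 fun x hx hxT => (hAsub hx) (Or.inr hxT)
  have hdisjAu : Disjoint A {u} := Set.disjoint_singleton_right.2 huA
  have hdisjuT : Disjoint ({u} : Set V) T := Set.disjoint_singleton_left.2 huT
  have hsplitCu : Subtype.val '' Cu.supp = A ∪ {u} :=
    (Set.diff_union_of_subset (Set.singleton_subset_iff.2 hum)).symm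
  have hCuT : eCount G (Subtype.val '' Cu.supp) T = eCount G A T + eCount G {u} T := by
    rw [hsplitCu]
    exact eCount_union_left G A {u} T hdisjAu hdisjAT hdisjuT
  have hAn : A.ncard + 1 = Nat.card Cu.supp := by
    rw [← nat_card_val_image, hAdef]
    exact Set.ncard_diff_singleton_add_one hum (Set.toFinite _)
  have hoddX : (a * Nat.card Cu.supp + eCount G (Subtype.val '' Cu.supp) T) % 2 = 1 :=
    Nat.odd_iff.1 hoddCu
  -- epsilon
  have hepsT : eCount G {u} T = Nat.card ↥(G.neighborSet u ∩ T) := eCount_singleton G u T huT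
  -- counting of USet
  have huU : u ∈ USet G a S T := hu
  have hUcard : ∀ U' : Set V, U' ⊆ USet G a S T \ {u} →
      ¬ (Nat.card (USet G a S T) ≤ Nat.card U') := by
    intro U' hsub hle
    rw [Nat.card_coe_set_eq, Nat.card_coe_set_eq] at hle
    have h1 : U'.ncard ≤ (USet G a S T \ {u}).ncard :=
      Set.ncard_le_ncard hsub (Set.toFinite _)
    have h2 : (USet G a S T \ {u}).ncard + 1 = (USet G a S T).ncard :=
      Set.ncard_diff_singleton_add_one huU (Set.toFinite _)
    omega
  constructor
  · -- degree claim
    by_contra hcon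
    have hdT : degOutside G S u ≤ a := by omega
    have hT'R : insert u T ⊆ insert u (S ∪ T) :=
      Set.insert_subset_insert Set.subset_union_right
    have hC1 : ∀ C : (G.induce (S ∪ T)ᶜ).ConnectedComponent,
        C ≠ (G.induce (S ∪ T)ᶜ).connectedComponentMk ⟨u, huR⟩ →
        eCount G (Subtype.val '' C.supp) (insert u T)
          = eCount G (Subtype.val '' C.supp) T := by
      intro C hne
      have hsubC : Subtype.val '' C.supp ⊆ (S ∪ T)ᶜ := by
        rintro _ ⟨d, -, rfl⟩
        exact d.2
      have hnotu : u ∉ Subtype.val '' C.supp := by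
        rintro ⟨d, hd, hdu2⟩
        exact hne (((ConnectedComponent.mem_supp_iff _ _).1 hd
          ▸ mk_u_eq G (S ∪ T) u huR d hdu2))
      rw [Set.insert_eq, eCount_union_right G _ _ _ hdisjuT
        (Set.disjoint_singleton_right.2 hnotu)
        (Set.disjoint_left.2 fun x hx hxT => (hsubC hx) (Or.inr hxT)),
        no_adj_of_ne G (S ∪ T) u huR hne, zero_add]
    obtain ⟨k, hk2, hcount, hsub⟩ :=
      key_count G a (S ∪ T) u huR T (insert u T) hT'R hC1 hoddCu
    -- identify qab and USet for the new pair
    have hq'id : qab G a S (insert u T)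
        = Nat.card {C : (G.induce (insert u (S ∪ T))ᶜ).ConnectedComponent //
            Odd (a * Nat.card C.supp + eCount G (Subtype.val '' C.supp) (insert u T))} := by
      unfold qab
      rw [Set.union_insert]
    have hUid : USet G a S (insert u T)
        = ⋃ C : {C : (G.induce (insert u (S ∪ T))ᶜ).ConnectedComponent //
            Odd (a * Nat.card C.supp + eCount G (Subtype.val '' C.supp) (insert u T))},
          Subtype.val '' (C : (G.induce (insert u (S ∪ T))ᶜ).ConnectedComponent).supp := by
      unfold USet
      rw [Set.union_insert]
    have hcountq : qab G a S (insert u T) + 1 = qab G a S T + k := by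
      rw [hq'id]
      exact hcount
    -- compute sigma parity pieces
    have hAT' : eCount G A (insert u T) = eCount G A {u} + eCount G A T := by
      rw [Set.insert_eq]
      exact eCount_union_right G A {u} T hdisjuT hdisjAu hdisjAT
    have hAu : eCount G A {u} = Nat.card ↥(G.neighborSet u ∩ (S ∪ T)ᶜ) := by
      rw [eCount_comm, eCount_singleton G u A huA]
      congr 1
      rw [neighborSet_inter G (S ∪ T) u huR]
    have hnd : eCount G {u} T + Nat.card ↥(G.neighborSet u ∩ (S ∪ T)ᶜ) = degOutside G S u := by
      rw [hepsT]
      unfold degOutside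
      rw [Nat.card_coe_set_eq, Nat.card_coe_set_eq, Nat.card_coe_set_eq,
        ← Set.ncard_union_eq ?_ (Set.toFinite _) (Set.toFinite _)]
      · congr 1
        ext v
        simp only [Set.mem_union, Set.mem_inter_iff, Set.mem_diff, Set.mem_compl_iff,
          mem_neighborSet]
        constructor
        · rintro (⟨h1, h2⟩ | ⟨h1, h2⟩)
          exacts [⟨h1, fun hS => Set.disjoint_left.1 hdisj hS h2⟩, ⟨h1, fun hS => h2 (Or.inl hS)⟩]
        · rintro ⟨h1, h2⟩
          by_cases hT2 : v ∈ T
          exacts [Or.inl ⟨h1, hT2⟩, Or.inr ⟨h1, fun h => h.elim h2 hT2⟩]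
      · exact Set.disjoint_left.2 fun x hx hx2 => hx2.2 (Or.inr hx.2)
    -- parity
    have hkey : degOutside G S u + 1 ≤ a + k := by
      have hmul : a * A.ncard + a = a * Nat.card Cu.supp := by
        rw [← hAn]; ring
      rw [← hCudef] at hk2
      rw [← hAdef] at hk2
      rw [hAT', hAu] at hk2
      set p := a * A.ncard with hp
      set P := a * Nat.card Cu.supp with hP
      clear_value p P
      set n := Nat.card ↥(G.neighborSet u ∩ (S ∪ T)ᶜ)
      set e1 := eCount G A T
      set eps := eCount G {u} T
      clear_value n e1 eps
      rw [hCuT] at hoddX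
      omega
    -- eta computation
    have hcardT' : ((Nat.card ↥(insert u T) : ℕ) : ℤ) = (Nat.card ↥T : ℤ) + 1 := by
      rw [Nat.card_coe_set_eq, Nat.card_coe_set_eq,
        Set.ncard_insert_of_notMem huT (Set.toFinite _)]
      push_cast
      ring
    have hqint : ((qab G a S (insert u T) : ℕ) : ℤ) = (qab G a S T : ℤ) + (k : ℤ) - 1 := by
      omega
    have heq : etaab G a b S (insert u T)
        = etaab G a b S T + ((degOutside G S u : ℤ) + 1 - (a : ℤ) - (k : ℤ)) := by
      unfold etaab
      rw [hcardT', finsum_mem_insert _ huT (Set.toFinite T), hqint]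
      push_cast
      ring
    have heta' : etaab G a b S (insert u T) ≤ -2 := by
      have hz : (degOutside G S u : ℤ) + 1 ≤ (a : ℤ) + k := by exact_mod_cast hkey
      rw [heq]
      linarith
    have hdisj' : Disjoint S (insert u T) := by
      rw [Set.disjoint_left]
      rintro x hxS hxI
      rcases Set.mem_insert_iff.1 hxI with rfl | hxT
      · exact huS hxS
      · exact Set.disjoint_left.1 hdisj hxS hxT
    refine hUcard (USet G a S (insert u T)) ?_ (hmin S (insert u T) hdisj' heta')
    rw [hUid]
    exact hsub
  · -- eCount claim
    by_contra hcon
    have hb1 : 1 ≤ b := le_trans ha hab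
    have heps : b ≤ eCount G {u} T := by omega
    have hT'R : T ⊆ insert u (S ∪ T) :=
      fun x hx => Set.mem_insert_of_mem _ (Or.inr hx)
    obtain ⟨k, hk2, hcount, hsub⟩ :=
      key_count G a (S ∪ T) u huR T T hT'R (fun C _ => rfl) hoddCu
    have hq'id : qab G a (insert u S) T
        = Nat.card {C : (G.induce (insert u (S ∪ T))ᶜ).ConnectedComponent //
            Odd (a * Nat.card C.supp + eCount G (Subtype.val '' C.supp) T)} := by
      unfold qab
      rw [Set.insert_union]
    have hUid : USet G a (insert u S) T
        = ⋃ C : {C : (G.induce (insert u (S ∪ T))ᶜ).ConnectedComponent //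
            Odd (a * Nat.card C.supp + eCount G (Subtype.val '' C.supp) T)},
          Subtype.val '' (C : (G.induce (insert u (S ∪ T))ᶜ).ConnectedComponent).supp := by
      unfold USet
      rw [Set.insert_union]
    have hcountq : qab G a (insert u S) T + 1 = qab G a S T + k := by
      rw [hq'id]
      exact hcount
    -- parity
    have hkey : b + 1 ≤ eCount G {u} T + k := by
      have hmul : a * A.ncard + a = a * Nat.card Cu.supp := by
        rw [← hAn]; ring
      rw [← hCudef] at hk2
      rw [← hAdef] at hk2
      set p := a * A.ncard with hp
      set P := a * Nat.card Cu.supp with hP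
      clear_value p P
      set e1 := eCount G A T
      set eps := eCount G {u} T
      clear_value e1 eps
      rw [hCuT] at hoddX
      omega
    -- sum over T
    have hsumT : (∑ᶠ x ∈ T, (degOutside G (insert u S) x : ℤ))
        = (∑ᶠ x ∈ T, (degOutside G S x : ℤ)) - (eCount G {u} T : ℤ) := by
      rw [← Set.coe_toFinset T, finsum_mem_coe_finset, finsum_mem_coe_finset]
      have hpt : ∀ x ∈ T.toFinset, (degOutside G (insert u S) x : ℤ)
          = (degOutside G S x : ℤ) - (if G.Adj u x then 1 else 0) := by
        intro x hx
        unfold degOutside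
        rw [Nat.card_coe_set_eq, Nat.card_coe_set_eq]
        have hset : G.neighborSet x \ insert u S = (G.neighborSet x \ S) \ {u} := by
          rw [Set.diff_diff, Set.union_singleton]
        rw [hset]
        by_cases hadj : G.Adj u x
        · have hmem : u ∈ G.neighborSet x \ S := ⟨hadj.symm, huS⟩
          have h1 : 1 ≤ (G.neighborSet x \ S).ncard :=
            (Set.ncard_pos (Set.toFinite _)).2 ⟨u, hmem⟩
          rw [if_pos hadj, Set.ncard_diff_singleton_of_mem hmem,
            Nat.cast_sub h1]
          ring
        · have hmem : u ∉ G.neighborSet x \ S := fun h => hadj (G.adj_symm h.1)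
          rw [if_neg hadj, Set.diff_singleton_eq_self hmem]
          ring
      rw [Finset.sum_congr rfl hpt, Finset.sum_sub_distrib]
      congr 1
      have : (eCount G {u} T : ℤ) = ((T.toFinset.filter (fun x => G.Adj u x)).card : ℤ) := by
        rw [hepsT, Nat.card_coe_set_eq]
        congr 1
        rw [Set.ncard_eq_toFinset_card']
        congr 1
        ext x
        simp [mem_neighborSet, and_comm]
      rw [Finset.sum_boole, Set.coe_toFinset]
      exact this.symm
    have hcardS' : ((Nat.card ↥(insert u S) : ℕ) : ℤ) = (Nat.card ↥S : ℤ) + 1 := by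
      rw [Nat.card_coe_set_eq, Nat.card_coe_set_eq,
        Set.ncard_insert_of_notMem huS (Set.toFinite _)]
      push_cast
      ring
    have hqint : ((qab G a (insert u S) T : ℕ) : ℤ) = (qab G a S T : ℤ) + (k : ℤ) - 1 := by
      omega
    have heq : etaab G a b (insert u S) T
        = etaab G a b S T + ((b : ℤ) - (eCount G {u} T : ℤ) + 1 - (k : ℤ)) := by
      unfold etaab
      rw [hcardS', hsumT, hqint]
      push_cast
      ring
    have heta' : etaab G a b (insert u S) T ≤ -2 := by
      have hz : (b : ℤ) + 1 ≤ (eCount G {u} T : ℤ) + k := by exact_mod_cast hkey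
      rw [heq]
      linarith
    have hdisj' : Disjoint (insert u S) T := by
      rw [Set.disjoint_left]
      rintro x hxI hxT
      rcases Set.mem_insert_iff.1 hxI with rfl | hxS
      · exact huT hxT
      · exact Set.disjoint_left.1 hdisj hxS hxT
    refine hUcard (USet G a (insert u S) T) ?_ (hmin (insert u S) T hdisj' heta')
    rw [hUid]
    exact hsub
end
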